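/- For z, w ∈ ℍ such that cos((z-w)/4) ≠ 0 and sin((z-w)/4) ≠ 0, define Γ_tw(z,w) := -log|tan((z-w)/4)| + log|tan((z - conj w)/4)| (the second tangent is automatically finite and nonzero since Im(z - conj w) > 0). Then: (a) Γ_tw(z + 2π, w) = -Γ_tw(z,w) (the twisted field changes sign under the half-turn); (b) Γ_tw(z + 4π, w) = Γ_tw(z,w) (periodicity on the double cover); (c) for every x ∈ ℝ and w ∈ ℍ, the same formula gives Γ_tw(x,w) = 0 (Dirichlet boundary condition). -/

import Mathlib

open Complex

/-- The covariance of the twisted Gaussian free field in the logarithmic chart: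
`Γ_tw(z,w) = -log|tan((z-w)/4)| + log|tan((z - conj w)/4)|`. -/
noncomputable def GammaTw (z w : ℂ) : ℝ :=
  - Real.log ‖Complex.tan ((z - w) / 4)‖
  + Real.log ‖Complex.tan ((z - (starRingEnd ℂ) w) / 4)‖

/-! Shifting `z` by `2π` moves both tangent arguments by `π/2`, which inverts `|tan|`
(junk value `0⁻¹ = 0` included) and so flips the sign of each logarithm; for real `x`
the two arguments are complex conjugates, so the logarithms cancel. -/

lemma Complex.norm_tan_add_pi_div_two (z : ℂ) :
    ‖tan (z + Real.pi / 2)‖ = ‖tan z‖⁻¹ := by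
  rw [tan_eq_sin_div_cos, sin_add_pi_div_two, cos_add_pi_div_two, tan_eq_sin_div_cos,
    norm_div, norm_div, norm_neg, inv_div]

lemma GammaTw_add_two_pi (z w : ℂ) : GammaTw (z + 2 * Real.pi) w = -GammaTw z w := by
  have shift (u : ℂ) : (z + 2 * Real.pi - u) / 4 = (z - u) / 4 + Real.pi / 2 := by ring
  simp only [GammaTw, shift, norm_tan_add_pi_div_two, Real.log_inv]
  ring

lemma GammaTw_add_four_pi (z w : ℂ) : GammaTw (z + 4 * Real.pi) w = GammaTw z w := by
  have : z + 4 * Real.pi = z + 2 * Real.pi + 2 * Real.pi := by ring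
  rw [this, GammaTw_add_two_pi, GammaTw_add_two_pi, neg_neg]

lemma GammaTw_ofReal (x : ℝ) (w : ℂ) : GammaTw x w = 0 := by
  have : ((x : ℂ) - (starRingEnd ℂ) w) / 4 = (starRingEnd ℂ) ((x - w) / 4) := by
    rw [map_div₀, map_sub, conj_ofReal, map_ofNat]
  rw [GammaTw, this, tan_conj, norm_conj, neg_add_cancel]

/-- Properties of the twisted covariance: sign change under the half-turn,
periodicity on the double cover, and the Dirichlet boundary condition. -/
theorem gammaTw_properties :
    (∀ z w : ℂ, 0 < z.im → 0 < w.im →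
      Complex.cos ((z - w) / 4) ≠ 0 → Complex.sin ((z - w) / 4) ≠ 0 →
      GammaTw (z + 2 * (Real.pi : ℂ)) w = - GammaTw z w)
    ∧ (∀ z w : ℂ, 0 < z.im → 0 < w.im →
      Complex.cos ((z - w) / 4) ≠ 0 → Complex.sin ((z - w) / 4) ≠ 0 →
      GammaTw (z + 4 * (Real.pi : ℂ)) w = GammaTw z w)
    ∧ (∀ (x : ℝ) (w : ℂ), 0 < w.im → GammaTw (x : ℂ) w = 0) :=
  ⟨fun z w _ _ _ _ => GammaTw_add_two_pi z w, fun z w _ _ _ _ => GammaTw_add_four_pi z w,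
    fun x w _ => GammaTw_ofReal x w⟩
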